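/- arXiv:2202.09853 — 3 statements merged into one kernel-verified Lean document; each statement's English description precedes it below -/
import Mathlib

section
/- Let G be a connected simple graph on [N], let e = uv be an edge of G, and let G△e be the graph on [N] ∪ {N+1} obtained by adding a new vertex N+1 adjacent to both u and v. If c is a D(G)-draconian sequence, then the sequence β(c) = (c_1,...,c_N,1) + e_u − e_{N+1}, i.e., the sequence obtained from c by increasing the u-th entry by 1 and appending a final entry 0, is a D(G△e)-draconian sequence. Moreover β is injective. -/
/-!
The new vertex of `G △ e` carries weight `0`, so the partial sum of `β(c)` over a set `S` is the
partial sum of `c` over the old vertices `T` of `S`, plus `1` when `u ∈ T`. The `D(G △ e)`-neighbourhood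
of `S` contains a copy of the `D(G)`-neighbourhood of `T`, and additionally the new vertex whenever
`u ∈ T`, since the new vertex is adjacent to `u`; this extra element pays for the extra `1`.
-/

/-- `c : V → ℕ` is a `D(H)`-draconian sequence for the simple graph `H` on `V`:
the entries sum to `|V| - 1` and, for every nonempty `S ⊆ V`, the partial sum over `S`
is strictly less than the size of `⋃_{i ∈ S} N_{D(H)}(i)`, where
`N_{D(H)}(i) = {ī} ∪ {j̄ : ij ∈ E(H)}`. -/
def DraconianD {V : Type*} [Fintype V] (H : SimpleGraph V) (c : V → ℕ) : Prop :=
  (∑ v, c v) = Fintype.card V - 1 ∧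
    ∀ S : Finset V, S.Nonempty →
      (∑ i ∈ S, c i) < ((S : Set V) ∪ ⋃ i ∈ S, H.neighborSet i).ncard

/-- `G △ e` for `e = uv`: add a new vertex (`none`) adjacent to exactly `u` and `v`. -/
def triExt {V : Type*} (G : SimpleGraph V) (u v : V) : SimpleGraph (Option V) :=
  SimpleGraph.fromRel fun a b =>
    (∃ x y, a = some x ∧ b = some y ∧ G.Adj x y) ∨ (a = none ∧ (b = some u ∨ b = some v))

open Finset

variable {V : Type*}

/-- The neighbourhood of `S` in `D(H)`, read on the vertex set `V` of `H`. -/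
def closedNbhd (H : SimpleGraph V) (S : Finset V) : Set V :=
  (S : Set V) ∪ ⋃ i ∈ S, H.neighborSet i

/-- The map `β` of the paper, with `none` as the new vertex `N+1`. -/
def bumpExtend [DecidableEq V] (u : V) (c : V → ℕ) : Option V → ℕ :=
  fun o => o.elim 0 fun x => c x + if x = u then 1 else 0

section triExt

variable {G : SimpleGraph V} {u v : V}

lemma triExt_adj_some_some {x y : V} (h : G.Adj x y) : (triExt G u v).Adj (some x) (some y) :=
  ⟨by simpa using h.ne, Or.inl (Or.inl ⟨x, y, rfl, rfl, h⟩)⟩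

lemma triExt_adj_some_none : (triExt G u v).Adj (some u) none :=
  ⟨by simp, Or.inr (Or.inr ⟨rfl, Or.inl rfl⟩)⟩

lemma image_some_closedNbhd_subset (S : Finset (Option V)) :
    some '' closedNbhd G S.eraseNone ⊆ closedNbhd (triExt G u v) S := by
  rintro _ ⟨x, hx | hx, rfl⟩
  · exact Or.inl (mem_eraseNone.mp hx)
  · obtain ⟨i, hi, hadj⟩ := by simpa using hx
    exact Or.inr (Set.mem_iUnion₂.mpr ⟨some i, hi, triExt_adj_some_some hadj⟩)

lemma none_mem_closedNbhd_triExt {S : Finset (Option V)} (hu : u ∈ S.eraseNone) :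
    none ∈ closedNbhd (triExt G u v) S :=
  Or.inr (Set.mem_iUnion₂.mpr ⟨some u, mem_eraseNone.mp hu, triExt_adj_some_none⟩)

lemma ncard_closedNbhd_eraseNone_add_le [Finite V] [DecidableEq V] (S : Finset (Option V)) :
    (closedNbhd G S.eraseNone).ncard + (if u ∈ S.eraseNone then 1 else 0) ≤
      (closedNbhd (triExt G u v) S).ncard := by
  have hsub := image_some_closedNbhd_subset (G := G) (u := u) (v := v) S
  have hcard : (some '' closedNbhd G S.eraseNone).ncard = (closedNbhd G S.eraseNone).ncard :=
    Set.ncard_image_of_injective _ (Option.some_injective _)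
  split_ifs with hu
  · calc (closedNbhd G S.eraseNone).ncard + 1
        = (insert none (some '' closedNbhd G S.eraseNone)).ncard := by
          rw [Set.ncard_insert_of_notMem (by simp) (Set.toFinite _), hcard]
      _ ≤ (closedNbhd (triExt G u v) S).ncard :=
          Set.ncard_le_ncard (Set.insert_subset (none_mem_closedNbhd_triExt hu) hsub)
  · simpa [hcard] using Set.ncard_le_ncard hsub

end triExt

section bumpExtend

variable [DecidableEq V] {u : V} {c : V → ℕ}

lemma sum_bumpExtend (S : Finset (Option V)) :
    ∑ o ∈ S, bumpExtend u c o = ∑ x ∈ S.eraseNone, c x + if u ∈ S.eraseNone then 1 else 0 := by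
  rw [← sum_ite_eq' S.eraseNone u (fun _ => 1), ← sum_add_distrib, sum_eraseNone]
  refine sum_congr rfl fun o _ => ?_
  cases o <;> rfl

lemma sum_univ_bumpExtend [Fintype V] : ∑ o, bumpExtend u c o = ∑ x, c x + 1 := by
  simp [Fintype.sum_option, bumpExtend, sum_add_distrib]

lemma bumpExtend_injective : Function.Injective (bumpExtend (V := V) u) := fun _ _ h =>
  funext fun x => Nat.add_right_cancel (congrFun h (some x))

theorem DraconianD.triExt_bumpExtend [Fintype V] {G : SimpleGraph V} {v : V} (hc : DraconianD G c) :
    DraconianD (triExt G u v) (bumpExtend u c) := by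
  obtain ⟨hsum, hpart⟩ := hc
  refine ⟨?_, fun S hS => ?_⟩
  · have hV : 0 < Fintype.card V := Fintype.card_pos_iff.mpr ⟨u⟩
    rw [sum_univ_bumpExtend, hsum, Fintype.card_option]
    omega
  · rw [sum_bumpExtend]
    rcases S.eraseNone.eq_empty_or_nonempty with hT | hT
    · have hnone : none ∈ S := by
        obtain ⟨o, ho⟩ := hS
        cases o with
        | none => exact ho
        | some x => simpa [hT] using mem_eraseNone.mpr ho
      simpa [hT] using (Set.ncard_pos (Set.toFinite _)).mpr ⟨none, Or.inl hnone⟩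
    · have hT_lt : ∑ x ∈ S.eraseNone, c x < (closedNbhd G S.eraseNone).ncard := hpart _ hT
      have := ncard_closedNbhd_eraseNone_add_le (G := G) (u := u) (v := v) S
      change _ < (closedNbhd (triExt G u v) S).ncard
      omega

end bumpExtend

theorem stmt3_general (N : ℕ) (G : SimpleGraph (Fin N))
    (u v : Fin N) :
    (∀ c : Fin N → ℕ, DraconianD G c →
        DraconianD (triExt G u v)
          (fun o => o.elim 0 fun x => c x + if x = u then 1 else 0)) ∧
      Function.Injective fun (c : Fin N → ℕ) (o : Option (Fin N)) =>
        o.elim 0 fun x => c x + if x = u then 1 else 0 :=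
  ⟨fun _ hc => hc.triExt_bumpExtend, bumpExtend_injective⟩

/-- If `G` is a connected graph on `[N]`, `e = uv` an edge, and `c` a `D(G)`-draconian
sequence, then `β(c) = (c,1) + e_u − e_{N+1}` (increase the `u`-entry by `1` and append a
final entry `0`) is a `D(G △ e)`-draconian sequence; moreover `β` is injective. -/
theorem stmt3 (N : ℕ) (G : SimpleGraph (Fin N)) (hconn : G.Connected)
    (u v : Fin N) (he : G.Adj u v) :
    (∀ c : Fin N → ℕ, DraconianD G c →
        DraconianD (triExt G u v)
          (fun o => o.elim 0 fun x => c x + if x = u then 1 else 0)) ∧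
      Function.Injective fun (c : Fin N → ℕ) (o : Option (Fin N)) =>
        o.elim 0 fun x => c x + if x = u then 1 else 0 :=
  stmt3_general N G u v
end

section
/- Let N >= 2, let M be a matching of K_N, let e = uv be an edge of K_N with M' = M ∪ {e} also a matching, let G = K_N△M and G' = K_N△M' with new vertex w. Let d be a D(G')-draconian sequence. If the entry d_w equals 1, then deleting the coordinate w from d yields a D(G)-draconian sequence. -/
/-- `K_N △ 𝓜` for a matching `𝓜` with `M` edges `{f i, g i}`: the complete graph on
`Fin N` (the `inl` vertices) together with, for each `i : Fin M`, a new vertex `inr i`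
adjacent to exactly `f i` and `g i`. -/
def MatchTri (N M : ℕ) (f g : Fin M → Fin N) : SimpleGraph (Fin N ⊕ Fin M) :=
  SimpleGraph.fromRel fun a b =>
    (∃ x y : Fin N, a = Sum.inl x ∧ b = Sum.inl y ∧ x ≠ y) ∨
    (∃ i : Fin M, a = Sum.inr i ∧ (b = Sum.inl (f i) ∨ b = Sum.inl (g i)))

namespace SimpleGraph

variable {V : Type*}

/-- The closed neighbourhood `N_H[s]`; for finite `s` its size is `|⋃_{i ∈ s} N_{D(H)}(i)|`. -/
def closedNbhd (H : SimpleGraph V) (s : Set V) : Set V :=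
  s ∪ ⋃ i ∈ s, H.neighborSet i

lemma mem_closedNbhd {H : SimpleGraph V} {s : Set V} {x : V} :
    x ∈ H.closedNbhd s ↔ x ∈ s ∨ ∃ i ∈ s, H.Adj i x := by
  simp [closedNbhd]

lemma adj_mem_closedNbhd {H : SimpleGraph V} {s : Set V} {u v : V} (huv : H.Adj u v)
    (hs : u ∈ s ∨ v ∈ s) : u ∈ H.closedNbhd s ∧ v ∈ H.closedNbhd s := by
  rcases hs with hu | hv
  · exact ⟨mem_closedNbhd.2 (.inl hu), mem_closedNbhd.2 (.inr ⟨u, hu, huv⟩)⟩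
  · exact ⟨mem_closedNbhd.2 (.inr ⟨v, hv, huv.symm⟩), mem_closedNbhd.2 (.inl hv)⟩

variable (G : SimpleGraph V) (u v : V)

@[simp]
lemma triExt_adj_some_some {a b : V} : (triExt G u v).Adj (some a) (some b) ↔ G.Adj a b := by
  simp [triExt, G.adj_comm b a]
  exact G.ne_of_adj

@[simp]
lemma triExt_adj_none_left {x : Option V} :
    (triExt G u v).Adj none x ↔ x = some u ∨ x = some v := by
  simp only [triExt, fromRel_adj]
  aesop

@[simp]
lemma triExt_adj_none_right {a : V} : (triExt G u v).Adj (some a) none ↔ a = u ∨ a = v := by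
  rw [adj_comm, triExt_adj_none_left]
  simp

lemma closedNbhd_triExt_image_some_subset (s : Set V) :
    (triExt G u v).closedNbhd (some '' s) ⊆ insert none (some '' G.closedNbhd s) := by
  rintro (_ | x) hx
  · exact Set.mem_insert _ _
  · simpa [mem_closedNbhd] using hx

lemma none_notMem_closedNbhd_triExt {s : Set V} (hu : u ∉ s) (hv : v ∉ s) :
    none ∉ (triExt G u v).closedNbhd (some '' s) := by
  simp only [mem_closedNbhd]
  aesop

lemma closedNbhd_triExt_insert_none_subset {s : Set V} (huv : G.Adj u v) (hs : u ∈ s ∨ v ∈ s) :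
    (triExt G u v).closedNbhd (insert none (some '' s)) ⊆ insert none (some '' G.closedNbhd s) := by
  obtain ⟨hu, hv⟩ := adj_mem_closedNbhd huv hs
  rintro (_ | x) hx
  · exact Set.mem_insert _ _
  · simp only [mem_closedNbhd] at hu hv
    simp [mem_closedNbhd] at hx ⊢
    rcases hx with hx | (rfl | rfl) | hx <;> tauto

end SimpleGraph

open SimpleGraph

lemma DraconianD.sum_lt_ncard_closedNbhd {V : Type*} [Fintype V] {H : SimpleGraph V}
    {c : V → ℕ} (hc : DraconianD H c) {S : Finset V} (hS : S.Nonempty) :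
    ∑ i ∈ S, c i < (H.closedNbhd S).ncard :=
  hc.2 S hS

lemma ncard_insert_none_image_some_le {V : Type*} (s : Set V) :
    (insert none (some '' s)).ncard ≤ s.ncard + 1 := by
  calc (insert none (some '' s)).ncard ≤ (some '' s).ncard + 1 := Set.ncard_insert_le _ _
    _ = s.ncard + 1 := by rw [Set.ncard_image_of_injective _ (Option.some_injective V)]

theorem DraconianD.of_triExt {V : Type*} [Fintype V] {G : SimpleGraph V} {u v : V}
    (huv : G.Adj u v) {d : Option V → ℕ} (hd : DraconianD (triExt G u v) d) (h1 : d none = 1) :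
    DraconianD G (fun x => d (some x)) := by
  classical
  refine ⟨?_, fun S hS => ?_⟩
  · show ∑ x, d (some x) = _
    have hsum := hd.1
    rw [Fintype.sum_option, Fintype.card_option, h1] at hsum
    omega
  show ∑ i ∈ S, d (some i) < (G.closedNbhd S).ncard
  set A := G.closedNbhd S
  by_cases hs : u ∈ S ∨ v ∈ S
  · have hlt := hd.sum_lt_ncard_closedNbhd (S := insert none (S.map .some)) (by simp)
    rw [Finset.sum_insert (by simp), Finset.sum_map, h1, Function.Embedding.some_apply] at hlt
    have hsub := closedNbhd_triExt_insert_none_subset G u v (s := S) huv hs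
    have hle : ((triExt G u v).closedNbhd ↑(insert none (S.map .some))).ncard ≤ A.ncard + 1 :=
      calc _ ≤ (insert none (some '' A)).ncard :=
            Set.ncard_le_ncard (by simpa using hsub) (Set.toFinite _)
        _ ≤ A.ncard + 1 := ncard_insert_none_image_some_le A
    omega
  · push Not at hs
    have hlt := hd.sum_lt_ncard_closedNbhd (S := S.map .some) (hS.map)
    rw [Finset.sum_map] at hlt
    have hsub := (Set.subset_insert_iff_of_notMem
      (none_notMem_closedNbhd_triExt G u v (s := S) hs.1 hs.2)).1
      (closedNbhd_triExt_image_some_subset G u v S)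
    have hle : ((triExt G u v).closedNbhd ↑(S.map .some)).ncard ≤ A.ncard :=
      calc _ ≤ (some '' A).ncard := Set.ncard_le_ncard (by simpa using hsub) (Set.toFinite _)
        _ = A.ncard := Set.ncard_image_of_injective _ (Option.some_injective V)
    exact hlt.trans_le hle

lemma matchTri_adj_inl_inl {N M : ℕ} {f g : Fin M → Fin N} {x y : Fin N} :
    (MatchTri N M f g).Adj (.inl x) (.inl y) ↔ x ≠ y := by
  simp +contextual [MatchTri]

theorem stmt7_general (N M : ℕ) (f g : Fin M → Fin N)
    (u v : Fin N) (huv : u ≠ v)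
    (d : Option (Fin N ⊕ Fin M) → ℕ)
    (hd : DraconianD (triExt (MatchTri N M f g) (Sum.inl u) (Sum.inl v)) d)
    (h1 : d none = 1) :
    DraconianD (MatchTri N M f g) (fun x => d (some x)) :=
  hd.of_triExt (matchTri_adj_inl_inl.2 huv) h1

/-- With `G = K_N △ 𝓜`, `e = uv` disjoint from the matching, and
`G' = K_N △ (𝓜 ∪ {e})` (new vertex `w = none`): if `d` is a `D(G')`-draconian sequence
with `d w = 1`, then deleting the coordinate `w` yields a `D(G)`-draconian sequence. -/
theorem stmt7 (N M : ℕ) (hN : 2 ≤ N) (f g : Fin M → Fin N)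
    (hmatch : Function.Injective (Sum.elim f g : Fin M ⊕ Fin M → Fin N))
    (u v : Fin N) (huv : u ≠ v)
    (hdisj : ∀ i : Fin M, u ≠ f i ∧ u ≠ g i ∧ v ≠ f i ∧ v ≠ g i)
    (d : Option (Fin N ⊕ Fin M) → ℕ)
    (hd : DraconianD (triExt (MatchTri N M f g) (Sum.inl u) (Sum.inl v)) d)
    (h1 : d none = 1) :
    DraconianD (MatchTri N M f g) (fun x => d (some x)) :=
  stmt7_general N M f g u v huv d hd h1
end

section
/- Let N >= 5 and 3 <= M <= N with M ≠ 4. Let C be an M-cycle in K_N and let G = K_N minus the edges of C. Then the number of D(G)-draconian sequences equals C(2(N−1), N−1) − 2M(N−2). -/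
/-- `K_N` minus the edges of the `M`-cycle with vertices `v 0, …, v (M-1)` (cyclically
adjacent). -/
def cycleRemoved (N M : ℕ) [NeZero M] (v : Fin M → Fin N) : SimpleGraph (Fin N) :=
  (⊤ : SimpleGraph (Fin N)) \
    SimpleGraph.fromRel fun a b => ∃ i : Fin M, a = v i ∧ b = v (i + 1)

/-- `𝒳(C_M) = {(N-2)·e_{v i} + e_j : i ∈ Fin M, j ∈ [N]}`. -/
def setX (N M : ℕ) (v : Fin M → Fin N) : Set (Fin N → ℕ) :=
  {c | ∃ (i : Fin M) (j : Fin N),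
    c = fun x => (if x = v i then N - 2 else 0) + (if x = j then 1 else 0)}

/-- `𝒴(C_M) = {r·e_{v i} + (N-1-r)·e_{v (i+2)} : i ∈ Fin M, 2 ≤ r ≤ N-3}`. -/
def setY (N M : ℕ) [NeZero M] (v : Fin M → Fin N) : Set (Fin N → ℕ) :=
  {c | ∃ (i : Fin M) (r : ℕ), 2 ≤ r ∧ r ≤ N - 3 ∧
    c = fun x => (if x = v i then r else 0) + (if x = v (i + 2) then N - 1 - r else 0)}

/-- `𝒵(C_M) = {r·e_{v i} + (N-2-r)·e_{v (i+2)} + e_s : i ∈ Fin M, 1 ≤ r ≤ N-3,`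
`s ∉ {v i, v (i+2)}}`. -/
def setZ (N M : ℕ) [NeZero M] (v : Fin M → Fin N) : Set (Fin N → ℕ) :=
  {c | ∃ (i : Fin M) (r : ℕ) (s : Fin N), 1 ≤ r ∧ r ≤ N - 3 ∧ s ≠ v i ∧ s ≠ v (i + 2) ∧
    c = fun x => (if x = v i then r else 0) +
      (if x = v (i + 2) then N - 2 - r else 0) + (if x = s then 1 else 0)}

section Aux
variable {N M : ℕ} [NeZero M] {v : Fin M → Fin N}
open Fin.CommRing

/-- symmetric cycle-adjacency -/
def Cyc (v : Fin M → Fin N) (a b : Fin N) : Prop :=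
  ∃ k : Fin M, (a = v k ∧ b = v (k + 1)) ∨ (b = v k ∧ a = v (k + 1))

lemma cyc_symm {a b : Fin N} : Cyc v a b ↔ Cyc v b a := by
  unfold Cyc; constructor <;> rintro ⟨k, h | h⟩ <;> exact ⟨k, by tauto⟩

lemma adj_iff {a b : Fin N} :
    (cycleRemoved N M v).Adj a b ↔ a ≠ b ∧ ¬ Cyc v a b := by
  simp only [cycleRemoved, SimpleGraph.sdiff_adj, SimpleGraph.top_adj,
    SimpleGraph.fromRel_adj, Cyc]
  constructor
  · rintro ⟨hne, h⟩
    refine ⟨hne, fun ⟨k, hk⟩ => h ⟨hne, ?_⟩⟩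
    rcases hk with h1 | h1
    · exact Or.inl ⟨k, h1⟩
    · exact Or.inr ⟨k, h1.1, h1.2⟩
  · rintro ⟨hne, h⟩
    refine ⟨hne, fun ⟨_, hk⟩ => h ?_⟩
    rcases hk with ⟨k, h1, h2⟩ | ⟨k, h1, h2⟩
    · exact ⟨k, Or.inl ⟨h1, h2⟩⟩
    · exact ⟨k, Or.inr ⟨h1, h2⟩⟩

lemma nz_two (hM3 : 3 ≤ M) : (2 : Fin M) ≠ 0 := by
  have h : ((2 : ℕ) : Fin M) = (2 : Fin M) := by push_cast; ring
  rw [← h, Ne, Fin.natCast_eq_zero]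
  intro hd; have := Nat.le_of_dvd (by norm_num) hd; omega

lemma nz_one (hM3 : 3 ≤ M) : (1 : Fin M) ≠ 0 := by
  have h : ((1 : ℕ) : Fin M) = (1 : Fin M) := by push_cast; ring
  rw [← h, Ne, Fin.natCast_eq_zero]
  intro hd; have := Nat.le_of_dvd (by norm_num) hd; omega

lemma nz_four (hM3 : 3 ≤ M) (hM4 : M ≠ 4) : (4 : Fin M) ≠ 0 := by
  have h : ((4 : ℕ) : Fin M) = (4 : Fin M) := by push_cast; ring
  rw [← h, Ne, Fin.natCast_eq_zero]
  intro hd; have := Nat.le_of_dvd (by norm_num) hd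
  interval_cases M <;> omega

lemma cyc_v_iff (hv : Function.Injective v) (j : Fin M) (u : Fin N) :
    Cyc v u (v j) ↔ u = v (j - 1) ∨ u = v (j + 1) := by
  constructor
  · rintro ⟨k, ⟨h1, h2⟩ | ⟨h1, h2⟩⟩
    · have : k = j - 1 := by have := hv h2; linear_combination -this
      exact Or.inl (this ▸ h1)
    · have : k = j := hv h1.symm
      exact Or.inr (by rw [h2, this])
  · rintro (h | h)
    · exact ⟨j - 1, Or.inl ⟨h, by congr 1; ring⟩⟩
    · exact ⟨j, Or.inr ⟨rfl, h⟩⟩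

lemma compl_eq (S : Finset (Fin N)) :
    ((S : Set (Fin N)) ∪ ⋃ i ∈ S, (cycleRemoved N M v).neighborSet i)ᶜ
      = {w | w ∉ S ∧ ∀ i ∈ S, Cyc v i w} := by
  ext w
  simp only [Set.mem_compl_iff, Set.mem_union, Set.mem_iUnion, SimpleGraph.mem_neighborSet,
    Finset.mem_coe, Set.mem_setOf_eq, not_or, not_exists, adj_iff]
  constructor
  · rintro ⟨hw, h⟩
    refine ⟨hw, fun i hi => ?_⟩
    have h2 := h i hi
    by_contra hc
    exact h2 ⟨fun he => hw (he ▸ hi), hc⟩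
  · rintro ⟨hw, h⟩
    exact ⟨hw, fun i hi hc => hc.2 (h i hi)⟩

end Aux
section Aux2
variable {N M : ℕ} [NeZero M] {v : Fin M → Fin N}
open Fin.CommRing

omit [NeZero M] in
lemma vne (hv : Function.Injective v) {a b : Fin M} (h : a ≠ b) : v a ≠ v b :=
  fun e => h (hv e)

lemma U_singleton (hv : Function.Injective v) (hM3 : 3 ≤ M) (i : Fin M) :
    ((({v i} : Finset (Fin N)) : Set (Fin N)) ∪
      ⋃ x ∈ ({v i} : Finset (Fin N)), (cycleRemoved N M v).neighborSet x).ncard + 2 = N := by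
  set U := (({v i} : Finset (Fin N)) : Set (Fin N)) ∪
      ⋃ x ∈ ({v i} : Finset (Fin N)), (cycleRemoved N M v).neighborSet x with hU
  have hcompl : Uᶜ = {v (i - 1), v (i + 1)} := by
    rw [hU, compl_eq]
    ext w
    simp only [Finset.mem_singleton, Set.mem_setOf_eq, Set.mem_insert_iff,
      Set.mem_singleton_iff]
    constructor
    · rintro ⟨hw, h⟩
      exact (cyc_v_iff hv i w).1 (cyc_symm.1 (h (v i) rfl))
    · rintro (rfl | rfl)
      · exact ⟨vne hv (fun e => nz_one hM3 (by linear_combination -e)),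
          fun x hx => by subst hx; exact cyc_symm.1 ((cyc_v_iff hv i _).2 (Or.inl rfl))⟩
      · exact ⟨vne hv (fun e => nz_one hM3 (by linear_combination e)),
          fun x hx => by subst hx; exact cyc_symm.1 ((cyc_v_iff hv i _).2 (Or.inr rfl))⟩
  have h2 : Uᶜ.ncard = 2 := by
    rw [hcompl]
    exact Set.ncard_pair (vne hv fun e => nz_two hM3 (by linear_combination -e))
  have h3 := Set.ncard_add_ncard_compl U
  rw [h2] at h3
  simpa using h3

lemma U_pair (hv : Function.Injective v) (hM3 : 3 ≤ M) (hM4 : M ≠ 4) (i : Fin M) :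
    ((({v i, v (i + 2)} : Finset (Fin N)) : Set (Fin N)) ∪
      ⋃ x ∈ ({v i, v (i + 2)} : Finset (Fin N)),
        (cycleRemoved N M v).neighborSet x).ncard + 1 = N := by
  set U := (({v i, v (i + 2)} : Finset (Fin N)) : Set (Fin N)) ∪
      ⋃ x ∈ ({v i, v (i + 2)} : Finset (Fin N)), (cycleRemoved N M v).neighborSet x with hU
  have hcompl : Uᶜ = {v (i + 1)} := by
    rw [hU, compl_eq]
    ext w
    simp only [Finset.mem_insert, Finset.mem_singleton, Set.mem_setOf_eq,
      Set.mem_singleton_iff, not_or]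
    constructor
    · rintro ⟨hw, h⟩
      have hA := (cyc_v_iff hv i w).1 (cyc_symm.1 (h (v i) (Or.inl rfl)))
      have hB := (cyc_v_iff hv (i + 2) w).1 (cyc_symm.1 (h (v (i + 2)) (Or.inr rfl)))
      rw [show i + 2 - 1 = i + 1 by ring, show i + 2 + 1 = i + 3 by ring] at hB
      rcases hA with rfl | rfl
      · rcases hB with hB | hB
        · exact absurd hB (vne hv fun e => nz_two hM3 (by linear_combination -e))
        · exact absurd hB (vne hv fun e => nz_four hM3 hM4 (by linear_combination -e))
      · rfl
    · rintro rfl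
      refine ⟨⟨vne hv (fun e => nz_one hM3 (by linear_combination e)),
        vne hv (fun e => nz_one hM3 (by linear_combination -e))⟩, ?_⟩
      rintro x (rfl | rfl)
      · exact ⟨i, Or.inl ⟨rfl, rfl⟩⟩
      · exact ⟨i + 1, Or.inr ⟨rfl, by congr 1; ring⟩⟩
  have h2 : Uᶜ.ncard = 1 := by rw [hcompl]; exact Set.ncard_singleton _
  have h3 := Set.ncard_add_ncard_compl U
  rw [h2] at h3
  simpa using h3

end Aux2
section Aux3
variable {N M : ℕ} [NeZero M] {v : Fin M → Fin N}
open Fin.CommRing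

lemma draconian_iff (hN : 5 ≤ N) (hM3 : 3 ≤ M) (hM4 : M ≠ 4)
    (hv : Function.Injective v) {c : Fin N → ℕ} (hsum : ∑ x, c x = N - 1) :
    DraconianD (cycleRemoved N M v) c ↔
      (∀ i, c (v i) ≤ N - 3) ∧ (∀ i, c (v i) + c (v (i + 2)) ≤ N - 2) := by
  constructor
  · intro h
    constructor
    · intro i
      have h1 := h.2 {v i} ⟨v i, Finset.mem_singleton_self _⟩
      rw [Finset.sum_singleton] at h1
      have h2 := U_singleton hv hM3 i
      omega
    · intro i
      have hne : v i ≠ v (i + 2) := vne hv fun e => nz_two hM3 (by linear_combination -e)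
      have h1 := h.2 {v i, v (i + 2)} ⟨v i, by simp⟩
      rw [Finset.sum_pair hne] at h1
      have h2 := U_pair hv hM3 hM4 i
      omega
  · rintro ⟨C1, C2⟩
    refine ⟨by simpa using hsum, fun S hS => ?_⟩
    set U := ((S : Set (Fin N)) ∪ ⋃ i ∈ S, (cycleRemoved N M v).neighborSet i) with hU
    have hcard := Set.ncard_add_ncard_compl U
    rw [Nat.card_eq_fintype_card, Fintype.card_fin] at hcard
    have hsumS : ∑ i ∈ S, c i ≤ N - 1 := hsum ▸ Finset.sum_le_sum_of_subset (Finset.subset_univ S)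
    rcases Set.eq_empty_or_nonempty Uᶜ with hTe | ⟨w, hw⟩
    · have h0 : Uᶜ.ncard = 0 := by rw [hTe]; simp
      omega
    rw [hU, compl_eq] at hw
    obtain ⟨hwS, hwc⟩ := hw
    obtain ⟨u, hu⟩ := hS
    obtain ⟨j, rfl⟩ : ∃ j, w = v j := by
      rcases hwc u hu with ⟨k, ⟨_, h2⟩ | ⟨h2, _⟩⟩
      exacts [⟨k + 1, h2⟩, ⟨k, h2⟩]
    have hSsub : S ⊆ {v (j - 1), v (j + 1)} := by
      intro x hx
      rcases (cyc_v_iff hv j x).1 (hwc x hx) with h | h <;> simp [h]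
    by_cases ha : v (j - 1) ∈ S <;> by_cases hb : v (j + 1) ∈ S
    · -- both
      have hS_eq : S = {v (j - 1), v (j + 1)} :=
        Finset.Subset.antisymm hSsub
          (Finset.insert_subset ha (Finset.singleton_subset_iff.2 hb))
      have hne' : v (j - 1) ≠ v (j + 1) := vne hv fun e => nz_two hM3 (by linear_combination -e)
      have hsum2 : ∑ i ∈ S, c i = c (v (j - 1)) + c (v (j + 1)) := by
        rw [hS_eq, Finset.sum_pair hne']
      have hC := C2 (j - 1)
      rw [show j - 1 + 2 = j + 1 by ring] at hC
      have hTsub : Uᶜ ⊆ {v j} := by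
        intro x hx
        rw [hU, compl_eq] at hx
        have hA := (cyc_v_iff hv (j - 1) x).1 (cyc_symm.1 (hx.2 (v (j - 1)) (by rw [hS_eq]; simp)))
        have hB := (cyc_v_iff hv (j + 1) x).1 (cyc_symm.1 (hx.2 (v (j + 1)) (by rw [hS_eq]; simp)))
        rw [show j - 1 - 1 = j - 2 by ring, show j - 1 + 1 = j by ring] at hA
        rw [show j + 1 - 1 = j by ring, show j + 1 + 1 = j + 2 by ring] at hB
        rcases hA with rfl | rfl
        · rcases hB with hB | hB
          · exact absurd hB (vne hv fun e => nz_two hM3 (by linear_combination -e))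
          · exact absurd hB (vne hv fun e => nz_four hM3 hM4 (by linear_combination -e))
        · rfl
      have hT1 : Uᶜ.ncard ≤ 1 :=
        le_trans (Set.ncard_le_ncard hTsub (Set.toFinite _)) (by simp)
      omega
    · -- only a
      have hS_eq : S = {v (j - 1)} := by
        apply Finset.Subset.antisymm _ (Finset.singleton_subset_iff.2 ha)
        intro x hx
        rcases Finset.mem_insert.1 (hSsub hx) with h | h
        · simp [h]
        · rw [Finset.mem_singleton.1 h] at hx; exact absurd hx hb
      have hC := C1 (j - 1)
      have hsum2 : ∑ i ∈ S, c i = c (v (j - 1)) := by rw [hS_eq, Finset.sum_singleton]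
      have hTsub : Uᶜ ⊆ {v (j - 2), v j} := by
        intro x hx
        rw [hU, compl_eq] at hx
        have hA := (cyc_v_iff hv (j - 1) x).1 (cyc_symm.1 (hx.2 (v (j - 1)) (by rw [hS_eq]; simp)))
        rw [show j - 1 - 1 = j - 2 by ring, show j - 1 + 1 = j by ring] at hA
        rcases hA with rfl | rfl <;> simp
      have hT2 : Uᶜ.ncard ≤ 2 :=
        le_trans (Set.ncard_le_ncard hTsub (Set.toFinite _))
          (le_trans (Set.ncard_insert_le _ _) (by simp))
      omega
    · -- only b
      have hS_eq : S = {v (j + 1)} := by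
        apply Finset.Subset.antisymm _ (Finset.singleton_subset_iff.2 hb)
        intro x hx
        rcases Finset.mem_insert.1 (hSsub hx) with h | h
        · rw [h] at hx; exact absurd hx ha
        · simp [Finset.mem_singleton.1 h]
      have hC := C1 (j + 1)
      have hsum2 : ∑ i ∈ S, c i = c (v (j + 1)) := by rw [hS_eq, Finset.sum_singleton]
      have hTsub : Uᶜ ⊆ {v j, v (j + 2)} := by
        intro x hx
        rw [hU, compl_eq] at hx
        have hA := (cyc_v_iff hv (j + 1) x).1 (cyc_symm.1 (hx.2 (v (j + 1)) (by rw [hS_eq]; simp)))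
        rw [show j + 1 - 1 = j by ring, show j + 1 + 1 = j + 2 by ring] at hA
        rcases hA with rfl | rfl <;> simp
      have hT2 : Uᶜ.ncard ≤ 2 :=
        le_trans (Set.ncard_le_ncard hTsub (Set.toFinite _))
          (le_trans (Set.ncard_insert_le _ _) (by simp))
      omega
    · exfalso
      rcases Finset.mem_insert.1 (hSsub hu) with h | h
      · exact ha (h ▸ hu)
      · exact hb (Finset.mem_singleton.1 h ▸ hu)
end Aux3
section Aux4
variable {N M : ℕ} [NeZero M] {v : Fin M → Fin N}
open Fin.CommRing

def FX (N : ℕ) {M : ℕ} (v : Fin M → Fin N) : Fin M × Fin N → (Fin N → ℕ) :=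
  fun p x => (if x = v p.1 then N - 2 else 0) + (if x = p.2 then 1 else 0)

def FY (N : ℕ) {M : ℕ} [NeZero M] (v : Fin M → Fin N) :
    Fin M × Fin (N - 4) → (Fin N → ℕ) :=
  fun p x => (if x = v p.1 then (p.2 : ℕ) + 2 else 0) +
    (if x = v (p.1 + 2) then N - 1 - ((p.2 : ℕ) + 2) else 0)

omit [NeZero M] in
lemma setX_eq : setX N M v = Set.range (FX N v) := by
  ext c
  constructor
  · rintro ⟨i, j, rfl⟩; exact ⟨(i, j), rfl⟩
  · rintro ⟨⟨i, j⟩, rfl⟩; exact ⟨i, j, rfl⟩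

lemma setY_eq (hN : 5 ≤ N) : setY N M v = Set.range (FY N v) := by
  ext c
  constructor
  · rintro ⟨i, r, h2, h3, rfl⟩
    refine ⟨(i, ⟨r - 2, by omega⟩), ?_⟩
    have hval : ((⟨r - 2, by omega⟩ : Fin (N - 4)) : ℕ) + 2 = r := by
      show r - 2 + 2 = r; omega
    unfold FY
    simp only [hval]
  · rintro ⟨⟨i, k⟩, rfl⟩
    exact ⟨i, (k : ℕ) + 2, by omega, by have := k.2; omega, rfl⟩

omit [NeZero M] in
lemma FX_inj (hN : 5 ≤ N) (hv : Function.Injective v) : Function.Injective (FX N v) := by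
  rintro ⟨i, j⟩ ⟨i', j'⟩ h
  have hii : i = i' := by
    by_contra hne
    have hvv : v i ≠ v i' := vne hv hne
    have h1 := congrFun h (v i)
    simp only [FX, if_pos rfl, if_neg hvv] at h1
    split_ifs at h1 <;> omega
  subst hii
  have hjj : j = j' := by
    by_contra hne
    have h1 := congrFun h j
    simp only [FX, if_pos rfl, if_neg hne] at h1
    split_ifs at h1 <;> omega
  rw [hjj]

lemma FY_inj (hN : 5 ≤ N) (hM3 : 3 ≤ M) (hM4 : M ≠ 4) (hv : Function.Injective v) :
    Function.Injective (FY N v) := by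
  rintro ⟨i, k⟩ ⟨i', k'⟩ h
  have hk2 := k.2
  have hk'2 := k'.2
  have hne2 : ∀ a : Fin M, v a ≠ v (a + 2) :=
    fun a => vne hv fun e => nz_two hM3 (by linear_combination -e)
  unfold FY at h
  dsimp only at h
  have hii : i = i' := by
    by_contra hne
    have hvv : v i ≠ v i' := vne hv hne
    by_cases hc : v i = v (i' + 2)
    · have h2 := congrFun h (v (i + 2))
      by_cases hd : v (i + 2) = v i'
      · have e1 : i = i' + 2 := hv hc
        have e2 : i + 2 = i' := hv hd
        exact nz_four hM3 hM4 (by linear_combination e2 - e1)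
      · have hd2 : v (i + 2) ≠ v (i' + 2) :=
          vne hv fun e => hne (by linear_combination e)
        rw [if_neg (Ne.symm (hne2 i)), if_pos rfl, if_neg hd, if_neg hd2] at h2
        omega
    · have h1 := congrFun h (v i)
      rw [if_pos rfl, if_neg (hne2 i), if_neg hvv, if_neg hc] at h1
      omega
  subst hii
  have h1 := congrFun h (v i)
  rw [if_pos rfl, if_neg (hne2 i), if_pos rfl, if_neg (hne2 i)] at h1
  have : k = k' := Fin.ext (by omega)
  rw [this]

end Aux4
section Aux5
variable {N M : ℕ} [NeZero M] {v : Fin M → Fin N}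
open Fin.CommRing

lemma sum_eq_one {α : Type*} [DecidableEq α] {s : Finset α} {f : α → ℕ}
    (h : ∑ x ∈ s, f x = 1) :
    ∃ j ∈ s, f j = 1 ∧ ∀ x ∈ s, x ≠ j → f x = 0 := by
  have hex : ∃ j ∈ s, f j ≠ 0 := by
    by_contra h0
    push_neg at h0
    rw [Finset.sum_eq_zero h0] at h
    omega
  obtain ⟨j, hj, hj0⟩ := hex
  have h2 : f j + ∑ x ∈ s.erase j, f x = 1 := by rw [Finset.add_sum_erase _ _ hj]; exact h
  have hr0 : ∑ x ∈ s.erase j, f x = 0 := by omega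
  exact ⟨j, hj, by omega, fun x hx hxj =>
    Finset.sum_eq_zero_iff.1 hr0 x (Finset.mem_erase.2 ⟨hxj, hx⟩)⟩

lemma mem_bad (hN : 5 ≤ N) (hM3 : 3 ≤ M) (hv : Function.Injective v) {c : Fin N → ℕ}
    (hc : c ∈ setX N M v ∪ setY N M v) :
    ¬((∀ i, c (v i) ≤ N - 3) ∧ (∀ i, c (v i) + c (v (i + 2)) ≤ N - 2)) := by
  rintro ⟨C1, C2⟩
  rcases hc with ⟨i, j, rfl⟩ | ⟨i, r, h2, h3, rfl⟩
  · have h1 := C1 i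
    simp only [if_pos rfl] at h1
    split_ifs at h1 <;> omega
  · have hne : v i ≠ v (i + 2) := vne hv fun e => nz_two hM3 (by linear_combination -e)
    have h1 := C2 i
    simp only [if_pos rfl, if_neg hne, if_neg (Ne.symm hne), if_true] at h1
    omega

lemma good_constraints (hN : 5 ≤ N) (hM3 : 3 ≤ M) (hv : Function.Injective v) {c : Fin N → ℕ}
    (hsum : ∑ x, c x = N - 1) (hcX : c ∉ setX N M v) (hcY : c ∉ setY N M v) :
    (∀ i, c (v i) ≤ N - 3) ∧ (∀ i, c (v i) + c (v (i + 2)) ≤ N - 2) := by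
  have C1 : ∀ i, c (v i) ≤ N - 3 := by
    intro i
    by_contra hgt
    push_neg at hgt
    apply hcX
    have hrest : c (v i) + ∑ x ∈ Finset.univ.erase (v i), c x = N - 1 := by
      rw [Finset.add_sum_erase _ c (Finset.mem_univ _)]; exact hsum
    rcases Nat.lt_or_ge (c (v i)) (N - 1) with hlt | hge
    · have hcvi : c (v i) = N - 2 := by omega
      have hrest1 : ∑ x ∈ Finset.univ.erase (v i), c x = 1 := by omega
      obtain ⟨j, hj, hj1, hj0⟩ := sum_eq_one hrest1
      have hjne : j ≠ v i := (Finset.mem_erase.1 hj).1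
      refine ⟨i, j, funext fun x => ?_⟩
      by_cases hx1 : x = v i
      · subst hx1
        rw [if_pos rfl, if_neg fun e => hjne e.symm]
        omega
      · by_cases hx2 : x = j
        · subst hx2
          rw [if_neg hx1, if_pos rfl]
          omega
        · rw [if_neg hx1, if_neg hx2]
          simpa using hj0 x (Finset.mem_erase.2 ⟨hx1, Finset.mem_univ _⟩) hx2
    · have hcvi : c (v i) = N - 1 := by
        have : c (v i) ≤ N - 1 := by omega
        omega
      have hrest0 : ∑ x ∈ Finset.univ.erase (v i), c x = 0 := by omega
      refine ⟨i, v i, funext fun x => ?_⟩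
      by_cases hx1 : x = v i
      · subst hx1
        rw [if_pos rfl, if_pos rfl]
        omega
      · rw [if_neg hx1, if_neg hx1]
        simpa using Finset.sum_eq_zero_iff.1 hrest0 x (Finset.mem_erase.2 ⟨hx1, Finset.mem_univ _⟩)
  refine ⟨C1, fun i => ?_⟩
  by_contra hgt
  push_neg at hgt
  apply hcY
  have hne : v i ≠ v (i + 2) := vne hv fun e => nz_two hM3 (by linear_combination -e)
  have hmem : v (i + 2) ∈ Finset.univ.erase (v i) :=
    Finset.mem_erase.2 ⟨Ne.symm hne, Finset.mem_univ _⟩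
  have hrest : c (v i) + (c (v (i + 2)) +
      ∑ x ∈ (Finset.univ.erase (v i)).erase (v (i + 2)), c x) = N - 1 := by
    rw [Finset.add_sum_erase _ c hmem, Finset.add_sum_erase _ c (Finset.mem_univ _)]
    exact hsum
  have h1 := C1 i
  have h2 := C1 (i + 2)
  have hr0 : ∑ x ∈ (Finset.univ.erase (v i)).erase (v (i + 2)), c x = 0 := by omega
  have hpair : c (v i) + c (v (i + 2)) = N - 1 := by omega
  refine ⟨i, c (v i), by omega, h1, funext fun x => ?_⟩
  by_cases hx1 : x = v i
  · subst hx1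
    rw [if_pos rfl, if_neg hne]
    omega
  · by_cases hx2 : x = v (i + 2)
    · subst hx2
      rw [if_neg (Ne.symm hne), if_pos rfl]
      omega
    · rw [if_neg hx1, if_neg hx2]
      simpa using Finset.sum_eq_zero_iff.1 hr0 x
        (Finset.mem_erase.2 ⟨hx2, Finset.mem_erase.2 ⟨hx1, Finset.mem_univ _⟩⟩)
end Aux5

/-- Theorem 3.5, case `M ≠ 4`: the number of `D(K_N \ E(C_M))`-draconian sequences is
`C(2(N-1), N-1) - 2M(N-2)`. -/
theorem stmt15 (N M : ℕ) [NeZero M] (hN : 5 ≤ N) (hM3 : 3 ≤ M) (hMN : M ≤ N)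
    (hM4 : M ≠ 4) (v : Fin M → Fin N) (hv : Function.Injective v) :
    (Set.ncard {c : Fin N → ℕ | DraconianD (cycleRemoved N M v) c} : ℤ) =
      (Nat.choose (2 * (N - 1)) (N - 1) : ℤ) - 2 * (M : ℤ) * ((N : ℤ) - 2) := by
  set A : Set (Fin N → ℕ) := {c | ∑ x, c x = N - 1} with hA
  -- X and Y are subsets of A
  have hXA : setX N M v ⊆ A := by
    rintro c ⟨i, j, rfl⟩
    show ∑ x, _ = N - 1
    rw [Finset.sum_add_distrib]
    simp only [Finset.sum_ite_eq', Finset.mem_univ, if_true]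
    omega
  have hYA : setY N M v ⊆ A := by
    rintro c ⟨i, r, h2, h3, rfl⟩
    show ∑ x, _ = N - 1
    rw [Finset.sum_add_distrib]
    simp only [Finset.sum_ite_eq', Finset.mem_univ, if_true]
    omega
  have hXY_A : setX N M v ∪ setY N M v ⊆ A := Set.union_subset hXA hYA
  -- finiteness
  haveI hfinsub : Finite ↥A := Finite.of_equiv _ (Sym.equivNatSumOfFintype (Fin N) (N - 1))
  have hfinA : A.Finite := Set.toFinite A
  have hfinX : (setX N M v).Finite := by
    rw [setX_eq, ← Set.image_univ]; exact Set.finite_univ.image _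
  have hfinY : (setY N M v).Finite := by
    rw [setY_eq hN, ← Set.image_univ]; exact Set.finite_univ.image _
  -- cardinalities
  have hA_card : A.ncard = (2 * (N - 1)).choose (N - 1) := by
    rw [← Nat.card_coe_set_eq]
    have e : ↥A ≃ Sym (Fin N) (N - 1) :=
      (Equiv.subtypeEquivRight fun c => Iff.rfl).trans
        (Sym.equivNatSumOfFintype (Fin N) (N - 1)).symm
    rw [Nat.card_congr e, Nat.card_eq_fintype_card, Sym.card_sym_eq_choose, Fintype.card_fin]
    congr 1
    omega
  have hX_card : (setX N M v).ncard = M * N := by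
    rw [setX_eq, ← Set.image_univ, Set.ncard_image_of_injective _ (FX_inj hN hv),
      Set.ncard_univ]
    simp [Nat.card_eq_fintype_card]
  have hY_card : (setY N M v).ncard = M * (N - 4) := by
    rw [setY_eq hN, ← Set.image_univ,
      Set.ncard_image_of_injective _ (FY_inj hN hM3 hM4 hv), Set.ncard_univ]
    simp [Nat.card_eq_fintype_card]
  -- disjointness
  have hdisj : Disjoint (setX N M v) (setY N M v) := by
    rw [Set.disjoint_left]
    rintro c ⟨i, j, rfl⟩ ⟨i', r, h2, h3, heq⟩
    have hne' : v i' ≠ v (i' + 2) := vne hv fun e => nz_two hM3 (by letI := Fin.instCommRing M; linear_combination -e)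
    have hcf := congrFun heq (v i)
    rw [if_pos rfl] at hcf
    by_cases hA1 : v i = v i'
    · have hB1 : v i ≠ v (i' + 2) := fun e => hne' (hA1 ▸ e)
      rw [if_pos hA1, if_neg hB1] at hcf
      split_ifs at hcf <;> omega
    · rw [if_neg hA1] at hcf
      split_ifs at hcf <;> omega
  -- the main set identity
  have hset : {c : Fin N → ℕ | DraconianD (cycleRemoved N M v) c}
      = A \ (setX N M v ∪ setY N M v) := by
    ext c
    simp only [Set.mem_setOf_eq, Set.mem_diff]
    constructor
    · intro h
      have hsum : ∑ x, c x = N - 1 := by simpa using h.1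
      exact ⟨hsum, fun hmem => mem_bad hN hM3 hv hmem
        ((draconian_iff hN hM3 hM4 hv hsum).1 h)⟩
    · rintro ⟨hsum, hmem⟩
      rw [Set.mem_union] at hmem
      push_neg at hmem
      exact (draconian_iff hN hM3 hM4 hv hsum).2
        (good_constraints hN hM3 hv hsum hmem.1 hmem.2)
  have hle : (setX N M v ∪ setY N M v).ncard ≤ A.ncard :=
    Set.ncard_le_ncard hXY_A hfinA
  rw [hset, Set.ncard_diff hXY_A (hfinX.union hfinY), Nat.cast_sub hle, hA_card,
    Set.ncard_union_eq hdisj hfinX hfinY, hX_card, hY_card]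
  have h4 : (4 : ℕ) ≤ N := by omega
  rw [Nat.cast_add, Nat.cast_mul, Nat.cast_mul, Nat.cast_sub h4]
  push_cast
  ring
end
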